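/- arXiv:2312.06810 — 6 statements merged into one kernel-verified Lean document; each statement's English description precedes it below -/
import Mathlib

section
/- Suppose ε^u ≥ 0 componentwise, u̲ ≤ ū in ℝ^{n_u}, and ũ ∈ ℝ^{n_u} satisfies u̲ ≤ ũ ≤ ū. Let M = diag(max{ε^u, ū − u̲ − ε^u}) (componentwise max). Suppose a, b ∈ ℝ^{n_u} and δ^a, δ^b ∈ {0,1}^{n_u} satisfy, componentwise: a ≥ u̲, a ≥ ũ − ε^u, a ≤ u̲ + M(1 − δ^a), a ≤ ũ − ε^u + M δ^a, and b ≤ ū, b ≤ ũ + ε^u, b ≥ ū − M(1 − δ^b), b ≥ ũ + ε^u − M δ^b. Then a = max{u̲, ũ − ε^u} and b = min{ū, ũ + ε^u} componentwise, and consequently every u ∈ ℝ^{n_u} with u̲ ≤ u ≤ ū and |u − ũ| ≤ ε^u componentwise satisfies a ≤ u ≤ b. -/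
/-!
Whichever value the binary `δ` takes, one of the two big-`M` upper bounds loses its `M`-term
and pins `a` below one of `u̲`, `ũ - εᵘ`; together with the two lower bounds this forces
`a = max{u̲, ũ - εᵘ}`, and symmetrically `b = min{ū, ũ + εᵘ}`. An admissible `u` lies above
both `u̲` and `ũ - εᵘ` and below both `ū` and `ũ + εᵘ`, hence in `[a, b]`.
-/

section BigM

variable {R : Type*} [Ring R] [LinearOrder R] {l y a M δ : R}

theorem eq_max_of_bigM_bounds (hδ : δ = 0 ∨ δ = 1) (hl : l ≤ a) (hy : y ≤ a)
    (hl' : a ≤ l + M * (1 - δ)) (hy' : a ≤ y + M * δ) : a = max l y := by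
  refine le_antisymm ?_ (max_le hl hy)
  rcases hδ with rfl | rfl
  · simp only [mul_zero, add_zero] at hy'
    exact le_max_of_le_right hy'
  · simp only [sub_self, mul_zero, add_zero] at hl'
    exact le_max_of_le_left hl'

theorem eq_min_of_bigM_bounds (hδ : δ = 0 ∨ δ = 1) (hl : a ≤ l) (hy : a ≤ y)
    (hl' : l - M * (1 - δ) ≤ a) (hy' : y - M * δ ≤ a) : a = min l y := by
  refine le_antisymm (le_min hl hy) ?_
  rcases hδ with rfl | rfl
  · simp only [mul_zero, sub_zero] at hy'
    exact min_le_of_right_le hy'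
  · simp only [sub_self, mul_zero, sub_zero] at hl'
    exact min_le_of_left_le hl'

end BigM

section Interval

variable {R : Type*} [AddCommGroup R] [LinearOrder R] [IsOrderedAddMonoid R] {l h u t e : R}

theorem max_sub_le_of_abs_sub_le (hl : l ≤ u) (he : |u - t| ≤ e) : max l (t - e) ≤ u :=
  max_le hl (sub_le_comm.mp (abs_sub_le_iff.mp he).2)

theorem le_min_add_of_abs_sub_le (hh : u ≤ h) (he : |u - t| ≤ e) : u ≤ min h (t + e) :=
  le_min hh (sub_le_iff_le_add'.mp (abs_sub_le_iff.mp he).1)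

end Interval

theorem milp_input_control_bounds_general
    (nu : ℕ) (ulo uhi εu ut a b δa δb M : Fin nu → ℝ)
    (hδa : ∀ j, δa j = 0 ∨ δa j = 1)
    (hδb : ∀ j, δb j = 0 ∨ δb j = 1)
    (ha1 : ∀ j, ulo j ≤ a j)
    (ha2 : ∀ j, ut j - εu j ≤ a j)
    (ha3 : ∀ j, a j ≤ ulo j + M j * (1 - δa j))
    (ha4 : ∀ j, a j ≤ ut j - εu j + M j * δa j)
    (hb1 : ∀ j, b j ≤ uhi j)
    (hb2 : ∀ j, b j ≤ ut j + εu j)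
    (hb3 : ∀ j, uhi j - M j * (1 - δb j) ≤ b j)
    (hb4 : ∀ j, ut j + εu j - M j * δb j ≤ b j) :
    (∀ j, a j = max (ulo j) (ut j - εu j)) ∧
    (∀ j, b j = min (uhi j) (ut j + εu j)) ∧
    (∀ u : Fin nu → ℝ, (∀ j, ulo j ≤ u j ∧ u j ≤ uhi j) →
      (∀ j, |u j - ut j| ≤ εu j) → ∀ j, a j ≤ u j ∧ u j ≤ b j) := by
  have ha j := eq_max_of_bigM_bounds (hδa j) (ha1 j) (ha2 j) (ha3 j) (ha4 j)
  have hb j := eq_min_of_bigM_bounds (hδb j) (hb1 j) (hb2 j) (hb3 j) (hb4 j)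
  refine ⟨ha, hb, fun u hu habs j => ⟨?_, ?_⟩⟩
  · exact ha j ▸ max_sub_le_of_abs_sub_le (hu j).1 (habs j)
  · exact hb j ▸ le_min_add_of_abs_sub_le (hu j).2 (habs j)

/-- Control part of Proposition 1: the big-M MILP constraints with binary vectors
`δᵃ, δᵇ` force `a = max{u̲, ũ - εᵘ}` and `b = min{ū, ũ + εᵘ}` componentwise, so that
every admissible control `u` with `|u - ũ| ≤ εᵘ` satisfies `a ≤ u ≤ b`. -/
theorem milp_input_control_bounds
    (nu : ℕ) (ulo uhi εu ut a b δa δb M : Fin nu → ℝ)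
    (hε : ∀ j, 0 ≤ εu j)
    (hbnd : ∀ j, ulo j ≤ uhi j)
    (hut : ∀ j, ulo j ≤ ut j ∧ ut j ≤ uhi j)
    (hM : ∀ j, M j = max (εu j) (uhi j - ulo j - εu j))
    (hδa : ∀ j, δa j = 0 ∨ δa j = 1)
    (hδb : ∀ j, δb j = 0 ∨ δb j = 1)
    (ha1 : ∀ j, ulo j ≤ a j)
    (ha2 : ∀ j, ut j - εu j ≤ a j)
    (ha3 : ∀ j, a j ≤ ulo j + M j * (1 - δa j))
    (ha4 : ∀ j, a j ≤ ut j - εu j + M j * δa j)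
    (hb1 : ∀ j, b j ≤ uhi j)
    (hb2 : ∀ j, b j ≤ ut j + εu j)
    (hb3 : ∀ j, uhi j - M j * (1 - δb j) ≤ b j)
    (hb4 : ∀ j, ut j + εu j - M j * δb j ≤ b j) :
    (∀ j, a j = max (ulo j) (ut j - εu j)) ∧
    (∀ j, b j = min (uhi j) (ut j + εu j)) ∧
    (∀ u : Fin nu → ℝ, (∀ j, ulo j ≤ u j ∧ u j ≤ uhi j) →
      (∀ j, |u j - ut j| ≤ εu j) → ∀ j, a j ≤ u j ∧ u j ≤ b j) :=
  milp_input_control_bounds_general nu ulo uhi εu ut a b δa δb M hδa hδb ha1 ha2 ha3 ha4 hb1 hb2 hb3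
    hb4
end

section
/- Fix real numbers u̲ ≤ ū, ε ≥ 0, a point t with u̲ ≤ t ≤ ū, and M = max{ε, ū − u̲ − ε}. Suppose a ∈ ℝ and δ ∈ {0,1} satisfy a ≥ u̲, a ≥ t − ε, a ≤ u̲ + M(1 − δ), and a ≤ t − ε + M δ. Then a = max{u̲, t − ε}. -/
theorem bigM_max_encoding_sound_general
    (ulo ε t M a δ : ℝ)
    (hδ : δ = 0 ∨ δ = 1)
    (h1 : ulo ≤ a) (h2 : t - ε ≤ a)
    (h3 : a ≤ ulo + M * (1 - δ))
    (h4 : a ≤ t - ε + M * δ) :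
    a = max ulo (t - ε) := by
  have h_le_max : a ≤ ulo ∨ a ≤ t - ε := by
    rcases hδ with rfl | rfl
    · exact Or.inr (by simpa using h4)
    · exact Or.inl (by simpa using h3)
  exact le_antisymm (le_max_iff.2 h_le_max) (max_le h1 h2)

/-- Scalar big-M encoding of a maximum (proof of Proposition 1):
a single binary variable `δ` together with four linear inequalities forces
`a = max u̲ (t - ε)`. -/
theorem bigM_max_encoding_sound
    (ulo uhi ε t M a δ : ℝ)
    (hbnd : ulo ≤ uhi) (hε : 0 ≤ ε)
    (ht : ulo ≤ t ∧ t ≤ uhi)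
    (hM : M = max ε (uhi - ulo - ε))
    (hδ : δ = 0 ∨ δ = 1)
    (h1 : ulo ≤ a) (h2 : t - ε ≤ a)
    (h3 : a ≤ ulo + M * (1 - δ))
    (h4 : a ≤ t - ε + M * δ) :
    a = max ulo (t - ε) :=
  bigM_max_encoding_sound_general ulo ε t M a δ hδ h1 h2 h3 h4
end

section
/- Fix reals l ≤ u, and suppose â, b̂ ∈ ℝ satisfy l ≤ â ≤ b̂ ≤ u. Suppose a, b ∈ ℝ and δ^{--}, δ^{-+}, δ^{++} ∈ {0,1} with δ^{--} + δ^{-+} + δ^{++} = 1 satisfy: a ≥ â, a ≤ â − l(δ^{--} + δ^{-+}), a ≤ u δ^{++}, b ≥ b̂, b ≤ b̂ − l δ^{--}, b ≤ u(δ^{-+} + δ^{++}), and 0 ≤ a ≤ b. Then for every ẑ ∈ [â, b̂], the ReLU value max{0, ẑ} satisfies a ≤ max{0, ẑ} ≤ b. -/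
/-- If the selector `d` is off, `a ≤ u * d` pins `a` below `0`; if it is on, the complementary
selectors sum to `0`, so the `l`-term vanishes and `a` lies below `â ≤ ẑ`. -/
theorem le_max_zero_of_selector {α : Type*} [Ring α] [LinearOrder α] [IsOrderedRing α]
    {l u ah a s d zh : α} (hd : d = 0 ∨ d = 1) (hsum : s + d = 1)
    (ha_off : a ≤ ah - l * s) (ha_on : a ≤ u * d) (hz : ah ≤ zh) :
    a ≤ max 0 zh := by
  rcases hd with rfl | rfl
  · rw [mul_zero] at ha_on
    exact ha_on.trans (le_max_left 0 zh)
  · obtain rfl : s = 0 := by simpa using hsum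
    rw [mul_zero, sub_zero] at ha_off
    exact (ha_off.trans hz).trans (le_max_right 0 zh)

theorem milp_relu_encoding_sound_general
    (l u ah bh a b dmm dmp dpp : ℝ)
    (hbpp : dpp = 0 ∨ dpp = 1)
    (hsum : dmm + dmp + dpp = 1)
    (ha2 : a ≤ ah - l * (dmm + dmp))
    (ha3 : a ≤ u * dpp)
    (hb1 : bh ≤ b)
    (hab : 0 ≤ a ∧ a ≤ b) :
    ∀ zh : ℝ, ah ≤ zh → zh ≤ bh → a ≤ max 0 zh ∧ max 0 zh ≤ b := by
  intro zh hz1 hz2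
  exact ⟨le_max_zero_of_selector hbpp hsum ha2 ha3 hz1,
    max_le (hab.1.trans hab.2) (hz2.trans hb1)⟩

/-- Scalar MILP encoding of an uncertain ReLU activation (constraints (13) of the
paper), soundness: the three binary variables and the linear constraints force
`[a, b]` to be a valid interval bound on `ReLU(ẑ)` for every `ẑ ∈ [â, b̂]`. -/
theorem milp_relu_encoding_sound
    (l u ah bh a b dmm dmp dpp : ℝ)
    (hlu : l ≤ u)
    (h1 : l ≤ ah) (h2 : ah ≤ bh) (h3 : bh ≤ u)
    (hbmm : dmm = 0 ∨ dmm = 1)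
    (hbmp : dmp = 0 ∨ dmp = 1)
    (hbpp : dpp = 0 ∨ dpp = 1)
    (hsum : dmm + dmp + dpp = 1)
    (ha1 : ah ≤ a)
    (ha2 : a ≤ ah - l * (dmm + dmp))
    (ha3 : a ≤ u * dpp)
    (hb1 : bh ≤ b)
    (hb2 : b ≤ bh - l * dmm)
    (hb3 : b ≤ u * (dmp + dpp))
    (hab : 0 ≤ a ∧ a ≤ b) :
    ∀ zh : ℝ, ah ≤ zh → zh ≤ bh → a ≤ max 0 zh ∧ max 0 zh ≤ b :=
  milp_relu_encoding_sound_general l u ah bh a b dmm dmp dpp hbpp hsum ha2 ha3 hb1 hab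
end

section
/- Fix reals l ≤ u with l ≤ 0 ≤ u, and suppose â, b̂ ∈ ℝ satisfy l ≤ â ≤ b̂ ≤ u. Set a = max{0, â} and b = max{0, b̂}, and choose (δ^{--}, δ^{-+}, δ^{++}) = (1,0,0) if b̂ ≤ 0, (0,1,0) if â ≤ 0 < b̂, and (0,0,1) if â > 0. Then δ^{--} + δ^{-+} + δ^{++} = 1 and all of the following hold: a ≥ â, a ≤ â − l(δ^{--} + δ^{-+}), a ≤ u δ^{++}, b ≥ b̂, b ≤ b̂ − l δ^{--}, b ≤ u(δ^{-+} + δ^{++}), and 0 ≤ a ≤ b; i.e., the MILP ReLU encoding is feasible with the tight interval bounds. -/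
/-! The three binary variables select the phase of the neuron (inactive, unstable, active);
in each phase `a` and `b` are either `0` or the pre-activations themselves, and the
constraints reduce to the interval bounds `l ≤ â ≤ b̂ ≤ u`. -/

/-- `dmm, dmp, dpp` stand for the paper's `δ⁻⁻, δ⁻⁺, δ⁺⁺`. -/
def ReluMilpConstraints (l u ah bh a b dmm dmp dpp : ℝ) : Prop :=
  dmm + dmp + dpp = 1 ∧
    ah ≤ a ∧ a ≤ ah - l * (dmm + dmp) ∧ a ≤ u * dpp ∧
    bh ≤ b ∧ b ≤ bh - l * dmm ∧ b ≤ u * (dmp + dpp) ∧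
    0 ≤ a ∧ a ≤ b

namespace ReluMilpConstraints

variable {l u ah bh : ℝ}

theorem of_inactive (h1 : l ≤ ah) (h2 : ah ≤ bh) (hb : bh ≤ 0) :
    ReluMilpConstraints l u ah bh 0 0 1 0 0 := by
  unfold ReluMilpConstraints
  refine ⟨by norm_num, ?_, ?_, ?_, hb, ?_, ?_, le_rfl, le_rfl⟩ <;> linarith

theorem of_unstable (h1 : l ≤ ah) (ha : ah ≤ 0) (hb : 0 ≤ bh) (h3 : bh ≤ u) :
    ReluMilpConstraints l u ah bh 0 bh 0 1 0 := by
  unfold ReluMilpConstraints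
  refine ⟨by norm_num, ha, ?_, ?_, le_rfl, ?_, ?_, le_rfl, hb⟩ <;> linarith

theorem of_active (ha : 0 ≤ ah) (h2 : ah ≤ bh) (h3 : bh ≤ u) :
    ReluMilpConstraints l u ah bh ah bh 0 0 1 := by
  unfold ReluMilpConstraints
  refine ⟨by norm_num, le_rfl, ?_, ?_, le_rfl, ?_, ?_, ha, h2⟩ <;> linarith

end ReluMilpConstraints

theorem milp_relu_encoding_feasible_general
    (l u ah bh a b dmm dmp dpp : ℝ)
    (h1 : l ≤ ah) (h2 : ah ≤ bh) (h3 : bh ≤ u)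
    (ha : a = max 0 ah) (hb : b = max 0 bh)
    (hdmm : dmm = if bh ≤ 0 then 1 else 0)
    (hdmp : dmp = if ah ≤ 0 ∧ 0 < bh then 1 else 0)
    (hdpp : dpp = if 0 < ah then 1 else 0) :
    dmm + dmp + dpp = 1 ∧
    ah ≤ a ∧ a ≤ ah - l * (dmm + dmp) ∧ a ≤ u * dpp ∧
    bh ≤ b ∧ b ≤ bh - l * dmm ∧ b ≤ u * (dmp + dpp) ∧
    0 ≤ a ∧ a ≤ b := by
  subst ha hb hdmm hdmp hdpp
  rcases le_or_gt bh 0 with hb0 | hb0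
  · have ha0 : ah ≤ 0 := h2.trans hb0
    rw [max_eq_left hb0, max_eq_left ha0, if_pos hb0, if_neg (fun h => hb0.not_gt h.2),
      if_neg ha0.not_gt]
    exact ReluMilpConstraints.of_inactive h1 h2 hb0
  rcases le_or_gt ah 0 with ha0 | ha0
  · rw [max_eq_right hb0.le, max_eq_left ha0, if_neg hb0.not_ge, if_pos ⟨ha0, hb0⟩,
      if_neg ha0.not_gt]
    exact ReluMilpConstraints.of_unstable h1 ha0 hb0.le h3
  · rw [max_eq_right hb0.le, max_eq_right ha0.le, if_neg hb0.not_ge,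
      if_neg (fun h => ha0.not_ge h.1), if_pos ha0]
    exact ReluMilpConstraints.of_active ha0.le h2 h3

/-- Feasibility of the scalar MILP encoding of an uncertain ReLU activation
(constraints (13) of the paper): with `a = ReLU(â)`, `b = ReLU(b̂)` and the
indicated choice of the three binary variables, all constraints hold. -/
theorem milp_relu_encoding_feasible
    (l u ah bh a b dmm dmp dpp : ℝ)
    (hlu : l ≤ u) (hl0 : l ≤ 0) (h0u : 0 ≤ u)
    (h1 : l ≤ ah) (h2 : ah ≤ bh) (h3 : bh ≤ u)
    (ha : a = max 0 ah) (hb : b = max 0 bh)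
    (hdmm : dmm = if bh ≤ 0 then 1 else 0)
    (hdmp : dmp = if ah ≤ 0 ∧ 0 < bh then 1 else 0)
    (hdpp : dpp = if 0 < ah then 1 else 0) :
    dmm + dmp + dpp = 1 ∧
    ah ≤ a ∧ a ≤ ah - l * (dmm + dmp) ∧ a ≤ u * dpp ∧
    bh ≤ b ∧ b ≤ bh - l * dmm ∧ b ≤ u * (dmp + dpp) ∧
    0 ≤ a ∧ a ≤ b :=
  milp_relu_encoding_feasible_general l u ah bh a b dmm dmp dpp h1 h2 h3 ha hb hdmm hdmp hdpp
end

section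
/- Consider an ℓ-layer fully connected ReLU network on ℝ^{n_0}: given weight matrices W^{(i)} ∈ ℝ^{n_i × n_{i−1}} and biases b^{(i)} ∈ ℝ^{n_i} for i = 1,…,ℓ, define the forward pass by ẑ_i = W^{(i)} z_{i−1} + b^{(i)}, z_i = ReLU(ẑ_i) elementwise for i = 1,…,ℓ−1, and output f̃(z_0) = W^{(ℓ)} z_{ℓ−1} + b^{(ℓ)}. Given a_0 ≤ b_0 in ℝ^{n_0}, define recursively for i = 1,…,ℓ: â_{i,j} = Σ_q (W^{(i)}_{jq} a_{i−1,q} if W^{(i)}_{jq} ≥ 0 else W^{(i)}_{jq} b_{i−1,q}) + b^{(i)}_j, b̂_{i,j} = Σ_q (W^{(i)}_{jq} b_{i−1,q} if W^{(i)}_{jq} ≥ 0 else W^{(i)}_{jq} a_{i−1,q}) + b^{(i)}_j, and for i ≤ ℓ−1 set a_i = max{0, â_i}, b_i = max{0, b̂_i} elementwise. Then for every z_0 ∈ ℝ^{n_0} with a_0 ≤ z_0 ≤ b_0 componentwise, the output satisfies â_ℓ ≤ f̃(z_0) ≤ b̂_ℓ componentwise. -/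
/-- Post-activation values of an `(L+1)`-layer fully connected ReLU network:
`nnZval n W bb z0 0 = z0` and `nnZval n W bb z0 (i+1) = ReLU (W i ⬝ nnZval i + bb i)`. -/
noncomputable def nnZval (n : ℕ → ℕ) (W : ∀ i : ℕ, Fin (n (i + 1)) → Fin (n i) → ℝ)
    (bb : ∀ i : ℕ, Fin (n (i + 1)) → ℝ) (z0 : Fin (n 0) → ℝ) :
    (i : ℕ) → Fin (n i) → ℝ
  | 0 => z0
  | i + 1 => fun j => max 0 ((∑ q, W i j q * nnZval n W bb z0 i q) + bb i j)

/-- Output of the `(L+1)`-layer network: the final affine layer (index `L`) applied to the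
post-activation values of layer `L`, with no ReLU at the output. -/
noncomputable def nnOut (n : ℕ → ℕ) (L : ℕ) (W : ∀ i : ℕ, Fin (n (i + 1)) → Fin (n i) → ℝ)
    (bb : ∀ i : ℕ, Fin (n (i + 1)) → ℝ) (z0 : Fin (n 0) → ℝ) : Fin (n (L + 1)) → ℝ :=
  fun j => (∑ q, W L j q * nnZval n W bb z0 L q) + bb L j

/-- Interval bound propagation boxes `(a_i, b_i)` on the post-activation values:
sign-split affine propagation followed by elementwise ReLU of the bounds. -/
noncomputable def nnBox (n : ℕ → ℕ) (W : ∀ i : ℕ, Fin (n (i + 1)) → Fin (n i) → ℝ)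
    (bb : ∀ i : ℕ, Fin (n (i + 1)) → ℝ) (a0 b0 : Fin (n 0) → ℝ) :
    (i : ℕ) → (Fin (n i) → ℝ) × (Fin (n i) → ℝ)
  | 0 => (a0, b0)
  | i + 1 =>
      (fun j => max 0 ((∑ q, if 0 ≤ W i j q then W i j q * (nnBox n W bb a0 b0 i).1 q
                             else W i j q * (nnBox n W bb a0 b0 i).2 q) + bb i j),
       fun j => max 0 ((∑ q, if 0 ≤ W i j q then W i j q * (nnBox n W bb a0 b0 i).2 q
                             else W i j q * (nnBox n W bb a0 b0 i).1 q) + bb i j))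

/-- Sign-split lower bound `â_{i+1}` on the pre-activation values of layer `i+1`. -/
noncomputable def nnHatLow (n : ℕ → ℕ) (W : ∀ i : ℕ, Fin (n (i + 1)) → Fin (n i) → ℝ)
    (bb : ∀ i : ℕ, Fin (n (i + 1)) → ℝ) (a0 b0 : Fin (n 0) → ℝ) (i : ℕ) :
    Fin (n (i + 1)) → ℝ :=
  fun j => (∑ q, if 0 ≤ W i j q then W i j q * (nnBox n W bb a0 b0 i).1 q
                 else W i j q * (nnBox n W bb a0 b0 i).2 q) + bb i j

/-- Sign-split upper bound `b̂_{i+1}` on the pre-activation values of layer `i+1`. -/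
noncomputable def nnHatHigh (n : ℕ → ℕ) (W : ∀ i : ℕ, Fin (n (i + 1)) → Fin (n i) → ℝ)
    (bb : ∀ i : ℕ, Fin (n (i + 1)) → ℝ) (a0 b0 : Fin (n 0) → ℝ) (i : ℕ) :
    Fin (n (i + 1)) → ℝ :=
  fun j => (∑ q, if 0 ≤ W i j q then W i j q * (nnBox n W bb a0 b0 i).2 q
                 else W i j q * (nnBox n W bb a0 b0 i).1 q) + bb i j

/-!
If every coordinate of `z` lies in `[a, b]`, then for each weight row `w` the sign-split sums
bracket `∑ q, w q * z q`: multiplying by `w q ≥ 0` preserves the order of `a q ≤ z q ≤ b q` and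
multiplying by `w q < 0` reverses it. Adding the bias and applying the monotone map `max 0`
carries the bracket from the post-activation box of one layer to the next, so by induction each
box contains the corresponding post-activation vector; the output layer has no ReLU, so its
bracket is `[â, b̂]` itself.
-/

section SignSplit

variable {α ι : Type*} [Ring α] [LinearOrder α] [IsOrderedRing α] [Fintype ι]

theorem sum_ite_mul_le_sum_mul {w a z b : ι → α} (ha : a ≤ z) (hb : z ≤ b) :
    ∑ q, (if 0 ≤ w q then w q * a q else w q * b q) ≤ ∑ q, w q * z q := by
  refine Finset.sum_le_sum fun q _ => ?_
  split_ifs with hw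
  · exact mul_le_mul_of_nonneg_left (ha q) hw
  · exact mul_le_mul_of_nonpos_left (hb q) (le_of_not_ge hw)

theorem sum_mul_le_sum_ite_mul {w a z b : ι → α} (ha : a ≤ z) (hb : z ≤ b) :
    ∑ q, w q * z q ≤ ∑ q, (if 0 ≤ w q then w q * b q else w q * a q) := by
  refine Finset.sum_le_sum fun q _ => ?_
  split_ifs with hw
  · exact mul_le_mul_of_nonneg_left (hb q) hw
  · exact mul_le_mul_of_nonpos_left (ha q) (le_of_not_ge hw)

end SignSplit

section IntervalBoundPropagation

variable {n : ℕ → ℕ} {W : ∀ i : ℕ, Fin (n (i + 1)) → Fin (n i) → ℝ}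
  {bb : ∀ i : ℕ, Fin (n (i + 1)) → ℝ} {a0 b0 : Fin (n 0) → ℝ}
  {i : ℕ} {z : Fin (n i) → ℝ}

theorem nnHatLow_le_of_mem_nnBox (ha : (nnBox n W bb a0 b0 i).1 ≤ z)
    (hb : z ≤ (nnBox n W bb a0 b0 i).2) (j : Fin (n (i + 1))) :
    nnHatLow n W bb a0 b0 i j ≤ ∑ q, W i j q * z q + bb i j :=
  add_le_add_left (sum_ite_mul_le_sum_mul ha hb) _

theorem le_nnHatHigh_of_mem_nnBox (ha : (nnBox n W bb a0 b0 i).1 ≤ z)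
    (hb : z ≤ (nnBox n W bb a0 b0 i).2) (j : Fin (n (i + 1))) :
    ∑ q, W i j q * z q + bb i j ≤ nnHatHigh n W bb a0 b0 i j :=
  add_le_add_left (sum_mul_le_sum_ite_mul ha hb) _

theorem nnZval_mem_nnBox {z0 : Fin (n 0) → ℝ} (ha : a0 ≤ z0) (hb : z0 ≤ b0) :
    ∀ i, (nnBox n W bb a0 b0 i).1 ≤ nnZval n W bb z0 i ∧
      nnZval n W bb z0 i ≤ (nnBox n W bb a0 b0 i).2
  | 0 => ⟨ha, hb⟩
  | i + 1 =>
    have ⟨hlo, hhi⟩ := nnZval_mem_nnBox ha hb i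
    ⟨fun j => max_le_max_left 0 (nnHatLow_le_of_mem_nnBox hlo hhi j),
      fun j => max_le_max_left 0 (le_nnHatHigh_of_mem_nnBox hlo hhi j)⟩

end IntervalBoundPropagation

theorem nn_interval_bound_propagation_sound_general
    (n : ℕ → ℕ) (L : ℕ)
    (W : ∀ i : ℕ, Fin (n (i + 1)) → Fin (n i) → ℝ)
    (bb : ∀ i : ℕ, Fin (n (i + 1)) → ℝ)
    (a0 b0 : Fin (n 0) → ℝ) :
    ∀ z0 : Fin (n 0) → ℝ, (∀ q, a0 q ≤ z0 q ∧ z0 q ≤ b0 q) →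
      ∀ j : Fin (n (L + 1)),
        nnHatLow n W bb a0 b0 L j ≤ nnOut n L W bb z0 j ∧
        nnOut n L W bb z0 j ≤ nnHatHigh n W bb a0 b0 L j := by
  intro z0 hz j
  obtain ⟨hlo, hhi⟩ :=
    nnZval_mem_nnBox (W := W) (bb := bb) (fun q => (hz q).1) (fun q => (hz q).2) L
  exact ⟨nnHatLow_le_of_mem_nnBox hlo hhi j, le_nnHatHigh_of_mem_nnBox hlo hhi j⟩

/-- Interval-bound-propagation soundness (proof of Proposition 2, eqs. (21)–(23)):
for an `(L+1)`-layer fully connected ReLU network and every input `z0` in the box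
`[a0, b0]`, the network output lies in `[â_{L+1}, b̂_{L+1}]` computed by sign-split
affine propagation and elementwise ReLU of the bounds. -/
theorem nn_interval_bound_propagation_sound
    (n : ℕ → ℕ) (L : ℕ)
    (W : ∀ i : ℕ, Fin (n (i + 1)) → Fin (n i) → ℝ)
    (bb : ∀ i : ℕ, Fin (n (i + 1)) → ℝ)
    (a0 b0 : Fin (n 0) → ℝ) (hab : ∀ q, a0 q ≤ b0 q) :
    ∀ z0 : Fin (n 0) → ℝ, (∀ q, a0 q ≤ z0 q ∧ z0 q ≤ b0 q) →
      ∀ j : Fin (n (L + 1)),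
        nnHatLow n W bb a0 b0 L j ≤ nnOut n L W bb z0 j ∧
        nnOut n L W bb z0 j ≤ nnHatHigh n W bb a0 b0 L j :=
  nn_interval_bound_propagation_sound_general n L W bb a0 b0
end

section
/- Consider an ℓ-layer fully connected ReLU network with weight matrices W^{(i)} ∈ ℝ^{n_i × n_{i−1}} and biases b^{(i)} ∈ ℝ^{n_i}: ẑ_i = W^{(i)} z_{i−1} + b^{(i)}, z_i = ReLU(ẑ_i) elementwise for i = 1,…,ℓ−1, and output f̃(z_0) = W^{(ℓ)} z_{ℓ−1} + b^{(ℓ)}. Fix constant vectors l_i ≤ u_i ∈ ℝ^{n_i} (i = 1,…,ℓ). Suppose vectors a_0 ≤ b_0 ∈ ℝ^{n_0}; a_i, b_i, â_i, b̂_i ∈ ℝ^{n_i} and binary vectors δ^{--}_i, δ^{-+}_i, δ^{++}_i ∈ {0,1}^{n_i} for i = 1,…,ℓ−1; and a_ℓ, b_ℓ ∈ ℝ^{n_ℓ} satisfy: (i) for each i = 1,…,ℓ−1 and each row j, â_{i,j} = Σ_q (W^{(i)}_{jq} a_{i−1,q} if W^{(i)}_{jq} ≥ 0 else W^{(i)}_{jq}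 b_{i−1,q}) + b^{(i)}_j and b̂_{i,j} = Σ_q (W^{(i)}_{jq} b_{i−1,q} if W^{(i)}_{jq} ≥ 0 else W^{(i)}_{jq} a_{i−1,q}) + b^{(i)}_j, with l_i ≤ â_i ≤ b̂_i ≤ u_i; (ii) for each i = 1,…,ℓ−1, componentwise: a_i ≥ â_i, a_i ≤ â_i − diag(l_i)(δ^{--}_i + δ^{-+}_i), a_i ≤ diag(u_i) δ^{++}_i, b_i ≥ b̂_i, b_i ≤ b̂_i − diag(l_i) δ^{--}_i, b_i ≤ diag(u_i)(δ^{-+}_i + δ^{++}_i), 0 ≤ a_i ≤ b_i, and δ^{--}_{i,j} + δ^{-+}_{i,j} + δ^{++}_{i,j} = 1 for all j; (iii) for each row j, a_{ℓ,j} = Σ_q (W^{(ℓ)}_{jq} a_{ℓ−1,q} if W^{(ℓ)}_{jq} ≥ 0 else W^{(ℓ)}_{jq} b_{ℓ−1,q}) + b^{(ℓ)}_j and b_{ℓ,j} = Σ_q (W^{(ℓ)}_{jq} b_{ℓ−1,q} if W^{(ℓ)}_{jq} ≥ 0 else W^{(ℓ)}_{jq} a_{ℓ−1,q}) + b^{(ℓ)}_j.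 Then for every z_0 ∈ ℝ^{n_0} with a_0 ≤ z_0 ≤ b_0 componentwise, a_ℓ ≤ f̃(z_0) ≤ b_ℓ componentwise. -/
section

variable {ι R : Type*} [Fintype ι] [Ring R] [LinearOrder R] [IsOrderedRing R]

/-- The minimum of `∑ q, w q * z q` over the box `a ≤ z ≤ b`; swapping `a` and `b` gives the
maximum. -/
def signSplitDot (w a b : ι → R) : R :=
  ∑ q, if 0 ≤ w q then w q * a q else w q * b q

theorem signSplitDot_le_dot_le (w : ι → R) {a b z : ι → R}
    (hz : ∀ q, a q ≤ z q ∧ z q ≤ b q) :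
    signSplitDot w a b ≤ ∑ q, w q * z q ∧ ∑ q, w q * z q ≤ signSplitDot w b a := by
  constructor <;> refine Finset.sum_le_sum fun q _ => ?_ <;> split_ifs with hw
  · exact mul_le_mul_of_nonneg_left (hz q).1 hw
  · exact mul_le_mul_of_nonpos_left (hz q).2 (not_le.1 hw).le
  · exact mul_le_mul_of_nonneg_left (hz q).2 hw
  · exact mul_le_mul_of_nonpos_left (hz q).1 (not_le.1 hw).le

theorem max_zero_mem_of_binary_encoding {x ah bh a b l u s δ : R} (hx : ah ≤ x ∧ x ≤ bh)
    (hδ : δ = 0 ∨ δ = 1) (hsum : s + δ = 1)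
    (ha₂ : a ≤ ah - l * s) (ha₃ : a ≤ u * δ) (hb₁ : bh ≤ b) (hab : 0 ≤ a ∧ a ≤ b) :
    a ≤ max 0 x ∧ max 0 x ≤ b := by
  refine ⟨?_, max_le (hab.1.trans hab.2) (hx.2.trans hb₁)⟩
  rcases hδ with rfl | rfl
  · exact le_max_of_le_left (by simpa using ha₃)
  · obtain rfl : s = 0 := by simpa using hsum
    exact le_max_of_le_right (by simpa using ha₂.trans (sub_le_sub_right hx.1 _))

end

theorem nnZval_mem_box (n : ℕ → ℕ) (L : ℕ)
    (W : ∀ i : ℕ, Fin (n (i + 1)) → Fin (n i) → ℝ) (bb : ∀ i : ℕ, Fin (n (i + 1)) → ℝ)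
    (l u : ∀ i : ℕ, Fin (n (i + 1)) → ℝ) (av bv : ∀ i : ℕ, Fin (n i) → ℝ)
    (ah bh : ∀ i : ℕ, Fin (n (i + 1)) → ℝ) (dmm dmp dpp : ∀ i : ℕ, Fin (n (i + 1)) → ℝ)
    (hahEq : ∀ i, i < L → ∀ j, ah i j = signSplitDot (W i j) (av i) (bv i) + bb i j)
    (hbhEq : ∀ i, i < L → ∀ j, bh i j = signSplitDot (W i j) (bv i) (av i) + bb i j)
    (hbin : ∀ i, i < L → ∀ j, dpp i j = 0 ∨ dpp i j = 1)
    (hsum : ∀ i, i < L → ∀ j, dmm i j + dmp i j + dpp i j = 1)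
    (ha2 : ∀ i, i < L → ∀ j, av (i + 1) j ≤ ah i j - l i j * (dmm i j + dmp i j))
    (ha3 : ∀ i, i < L → ∀ j, av (i + 1) j ≤ u i j * dpp i j)
    (hb1 : ∀ i, i < L → ∀ j, bh i j ≤ bv (i + 1) j)
    (hab : ∀ i, i < L → ∀ j, 0 ≤ av (i + 1) j ∧ av (i + 1) j ≤ bv (i + 1) j)
    {z0 : Fin (n 0) → ℝ} (hz0 : ∀ q, av 0 q ≤ z0 q ∧ z0 q ≤ bv 0 q) :
    ∀ i ≤ L, ∀ q, av i q ≤ nnZval n W bb z0 i q ∧ nnZval n W bb z0 i q ≤ bv i q := by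
  intro i
  induction i with
  | zero => exact fun _ => hz0
  | succ i ih =>
    intro hi q
    have hiL : i < L := hi
    obtain ⟨hdot_lo, hdot_hi⟩ := signSplitDot_le_dot_le (W i q) (ih hiL.le)
    have hpre : ah i q ≤ (∑ p, W i q p * nnZval n W bb z0 i p) + bb i q ∧
        (∑ p, W i q p * nnZval n W bb z0 i p) + bb i q ≤ bh i q := by
      rw [hahEq i hiL q, hbhEq i hiL q]
      exact ⟨add_le_add_left hdot_lo _, add_le_add_left hdot_hi _⟩
    exact max_zero_mem_of_binary_encoding hpre (hbin i hiL q) (hsum i hiL q) (ha2 i hiL q)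
      (ha3 i hiL q) (hb1 i hiL q) (hab i hiL q)

/-- Layers are 0-indexed, so the paper's `ℓ` is `L + 1`: `av i, bv i` bound the layer-`i`
post-activations, `ah i, bh i` the layer-`(i + 1)` pre-activations, and `ah L, bh L` are the output
bounds `a_ℓ, b_ℓ`. -/
theorem milp_nn_reachable_set_sound_general
    (n : ℕ → ℕ) (L : ℕ)
    (W : ∀ i : ℕ, Fin (n (i + 1)) → Fin (n i) → ℝ)
    (bb : ∀ i : ℕ, Fin (n (i + 1)) → ℝ)
    (l u : ∀ i : ℕ, Fin (n (i + 1)) → ℝ)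
    (av bv : ∀ i : ℕ, Fin (n i) → ℝ)
    (ah bh : ∀ i : ℕ, Fin (n (i + 1)) → ℝ)
    (dmm dmp dpp : ∀ i : ℕ, Fin (n (i + 1)) → ℝ)
    -- (i) sign-split affine propagation with a-priori neuron bounds
    (hahEq : ∀ i, i < L → ∀ j, ah i j =
        (∑ q, if 0 ≤ W i j q then W i j q * av i q else W i j q * bv i q) + bb i j)
    (hbhEq : ∀ i, i < L → ∀ j, bh i j =
        (∑ q, if 0 ≤ W i j q then W i j q * bv i q else W i j q * av i q) + bb i j)
    -- (ii) binary ReLU-status encoding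
    (hbin : ∀ i, i < L → ∀ j, (dmm i j = 0 ∨ dmm i j = 1) ∧
        (dmp i j = 0 ∨ dmp i j = 1) ∧ (dpp i j = 0 ∨ dpp i j = 1))
    (hsum : ∀ i, i < L → ∀ j, dmm i j + dmp i j + dpp i j = 1)
    (ha2 : ∀ i, i < L → ∀ j, av (i + 1) j ≤ ah i j - l i j * (dmm i j + dmp i j))
    (ha3 : ∀ i, i < L → ∀ j, av (i + 1) j ≤ u i j * dpp i j)
    (hb1 : ∀ i, i < L → ∀ j, bh i j ≤ bv (i + 1) j)
    (hab : ∀ i, i < L → ∀ j, 0 ≤ av (i + 1) j ∧ av (i + 1) j ≤ bv (i + 1) j)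
    -- (iii) output layer
    (houtA : ∀ j, ah L j =
        (∑ q, if 0 ≤ W L j q then W L j q * av L q else W L j q * bv L q) + bb L j)
    (houtB : ∀ j, bh L j =
        (∑ q, if 0 ≤ W L j q then W L j q * bv L q else W L j q * av L q) + bb L j) :
    ∀ z0 : Fin (n 0) → ℝ, (∀ q, av 0 q ≤ z0 q ∧ z0 q ≤ bv 0 q) →
      ∀ j : Fin (n (L + 1)),
        ah L j ≤ nnOut n L W bb z0 j ∧ nnOut n L W bb z0 j ≤ bh L j := by
  intro z0 hz0 j
  have hhidden := nnZval_mem_box n L W bb l u av bv ah bh dmm dmp dpp hahEq hbhEq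
    (fun i hi j => (hbin i hi j).2.2) hsum ha2 ha3 hb1 hab hz0 L le_rfl
  obtain ⟨hlo, hhi⟩ := signSplitDot_le_dot_le (W L j) hhidden
  rw [houtA j, houtB j]
  exact ⟨add_le_add_left hlo _, add_le_add_left hhi _⟩

/-- Proposition 2 of the paper: the MILP constraints ((12)–(14)) — sign-split affine
interval propagation `â, b̂`, binary encoding of the uncertain ReLU status, and
the final affine layer — guarantee that for every input `z0` in the box
`[a_0, b_0]`, the network output lies in the box `[a_{L+1}, b_{L+1}]`
(written here `ah L ≤ f̃(z0) ≤ bh L`).  Layers are 0-indexed: the paper's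
`ℓ`-layer network has `ℓ = L + 1`; `av i, bv i` are the bounds on the layer-`i`
post-activations, `ah i, bh i` the bounds on the layer-`(i+1)` pre-activations,
and `ah L, bh L` the output bounds `a_ℓ, b_ℓ`. -/
theorem milp_nn_reachable_set_sound
    (n : ℕ → ℕ) (L : ℕ)
    (W : ∀ i : ℕ, Fin (n (i + 1)) → Fin (n i) → ℝ)
    (bb : ∀ i : ℕ, Fin (n (i + 1)) → ℝ)
    (l u : ∀ i : ℕ, Fin (n (i + 1)) → ℝ)
    (av bv : ∀ i : ℕ, Fin (n i) → ℝ)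
    (ah bh : ∀ i : ℕ, Fin (n (i + 1)) → ℝ)
    (dmm dmp dpp : ∀ i : ℕ, Fin (n (i + 1)) → ℝ)
    (hlu : ∀ i, i < L → ∀ j, l i j ≤ u i j)
    (h0 : ∀ q, av 0 q ≤ bv 0 q)
    -- (i) sign-split affine propagation with a-priori neuron bounds
    (hahEq : ∀ i, i < L → ∀ j, ah i j =
        (∑ q, if 0 ≤ W i j q then W i j q * av i q else W i j q * bv i q) + bb i j)
    (hbhEq : ∀ i, i < L → ∀ j, bh i j =
        (∑ q, if 0 ≤ W i j q then W i j q * bv i q else W i j q * av i q) + bb i j)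
    (hhat : ∀ i, i < L → ∀ j, l i j ≤ ah i j ∧ ah i j ≤ bh i j ∧ bh i j ≤ u i j)
    -- (ii) binary ReLU-status encoding
    (hbin : ∀ i, i < L → ∀ j, (dmm i j = 0 ∨ dmm i j = 1) ∧
        (dmp i j = 0 ∨ dmp i j = 1) ∧ (dpp i j = 0 ∨ dpp i j = 1))
    (hsum : ∀ i, i < L → ∀ j, dmm i j + dmp i j + dpp i j = 1)
    (ha1 : ∀ i, i < L → ∀ j, ah i j ≤ av (i + 1) j)
    (ha2 : ∀ i, i < L → ∀ j, av (i + 1) j ≤ ah i j - l i j * (dmm i j + dmp i j))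
    (ha3 : ∀ i, i < L → ∀ j, av (i + 1) j ≤ u i j * dpp i j)
    (hb1 : ∀ i, i < L → ∀ j, bh i j ≤ bv (i + 1) j)
    (hb2 : ∀ i, i < L → ∀ j, bv (i + 1) j ≤ bh i j - l i j * dmm i j)
    (hb3 : ∀ i, i < L → ∀ j, bv (i + 1) j ≤ u i j * (dmp i j + dpp i j))
    (hab : ∀ i, i < L → ∀ j, 0 ≤ av (i + 1) j ∧ av (i + 1) j ≤ bv (i + 1) j)
    -- (iii) output layer
    (houtA : ∀ j, ah L j =
        (∑ q, if 0 ≤ W L j q then W L j q * av L q else W L j q * bv L q) + bb L j)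
    (houtB : ∀ j, bh L j =
        (∑ q, if 0 ≤ W L j q then W L j q * bv L q else W L j q * av L q) + bb L j) :
    ∀ z0 : Fin (n 0) → ℝ, (∀ q, av 0 q ≤ z0 q ∧ z0 q ≤ bv 0 q) →
      ∀ j : Fin (n (L + 1)),
        ah L j ≤ nnOut n L W bb z0 j ∧ nnOut n L W bb z0 j ≤ bh L j :=
  milp_nn_reachable_set_sound_general n L W bb l u av bv ah bh dmm dmp dpp hahEq hbhEq hbin hsum ha2
    ha3 hb1 hab houtA houtB
end
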